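/- arXiv:2510.18597 — 3 statements merged into one kernel-verified Lean document; each statement's English description precedes it below -/
import Mathlib

section
/- Cyclic invariance of the wedge product: let N ≥ 1 be an integer and let ω, η : ℤ/Nℤ → ℝ be two functions satisfying ∑_{i ∈ ℤ/Nℤ} ω(i) = 0 and ∑_{i ∈ ℤ/Nℤ} η(i) = 0. Then for every integer k, ∑_{0 ≤ i < j ≤ N−1} ( ω(i+k)·η(j+k) − ω(j+k)·η(i+k) ) = ∑_{0 ≤ i < j ≤ N−1} ( ω(i)·η(j) − ω(j)·η(i) ), where the arguments i+k and j+k are taken modulo N. (Lemma 5.2 of the paper, where N = 4g and ω(e_i), η(e_i) are the values of two co-boundaries on the boundary arcs e_1, …, e_{4g} of a fundamental domain; the hypotheses ∑ω = ∑η = 0 express that co-boundaries sum to zero over the boundary of the fundamental domain.) -/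
/-!
Write `W(a, b) = ∑_{i<j} (a_i b_j - a_j b_i)` for a sequence of length `N`. Rotating the sequence
by one moves the first entry to the end, which flips the sign of every term pairing it with the
others: `W` changes by `2 (b_0 ∑ a - a_0 ∑ b)`, which vanishes when both sums do. Since `1`
generates `ℤ/Nℤ`, invariance under rotation by one gives invariance under every shift.
-/

open Finset

section Wedge

variable {R : Type*} [CommRing R]

def wedge (a b : ℕ → R) (N : ℕ) : R :=
  ∑ i ∈ range N, ∑ j ∈ Ico (i + 1) N, (a i * b j - a j * b i)

theorem wedge_succ (a b : ℕ → R) (N : ℕ) :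
    wedge a b (N + 1) =
      wedge a b N + (∑ i ∈ range N, a i) * b N - a N * ∑ i ∈ range N, b i := by
  have hinner : ∀ i ∈ range N, ∑ j ∈ Ico (i + 1) (N + 1), (a i * b j - a j * b i) =
      ∑ j ∈ Ico (i + 1) N, (a i * b j - a j * b i) + (a i * b N - a N * b i) := fun i hi =>
    sum_Ico_succ_top (Nat.succ_le_of_lt (mem_range.1 hi)) _
  rw [wedge, sum_range_succ, Ico_self, sum_empty, add_zero, sum_congr rfl hinner,
    sum_add_distrib, sum_sub_distrib, sum_mul, mul_sum, wedge]
  ring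

theorem wedge_succ' (a b : ℕ → R) (N : ℕ) :
    wedge a b (N + 1) =
      wedge (fun i => a (i + 1)) (fun i => b (i + 1)) N +
        a 0 * ∑ i ∈ range N, b (i + 1) - (∑ i ∈ range N, a (i + 1)) * b 0 := by
  have hfirst : ∑ j ∈ Ico 1 (N + 1), (a 0 * b j - a j * b 0) =
      ∑ j ∈ range N, (a 0 * b (j + 1) - a (j + 1) * b 0) := by
    rw [range_eq_Ico, sum_Ico_add' (fun j => a 0 * b j - a j * b 0)]
  rw [wedge, sum_range_succ', hfirst, sum_sub_distrib, mul_sum, sum_mul, wedge]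
  have hrest : ∀ i ∈ range N,
      ∑ j ∈ Ico (i + 1 + 1) (N + 1), (a (i + 1) * b j - a j * b (i + 1)) =
      ∑ j ∈ Ico (i + 1) N, (a (i + 1) * b (j + 1) - a (j + 1) * b (i + 1)) := fun i _ =>
    (sum_Ico_add' (fun j => a (i + 1) * b j - a j * b (i + 1)) _ _ _).symm
  rw [sum_congr rfl hrest]
  ring

theorem wedge_rotate (a b : ℕ → R) {N : ℕ} (ha : a N = a 0) (hb : b N = b 0) :
    wedge (fun i => a (i + 1)) (fun i => b (i + 1)) N =
      wedge a b N + 2 * (b 0 * ∑ i ∈ range N, a i - a 0 * ∑ i ∈ range N, b i) := by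
  cases N with
  | zero => simp [wedge]
  | succ N =>
    rw [wedge_succ, wedge_succ' a b, ha, hb, sum_range_succ' a, sum_range_succ' b]
    ring

end Wedge

theorem sum_range_rotate {M : Type*} [AddCancelCommMonoid M] (g : ℕ → M) {N : ℕ}
    (hg : g N = g 0) : ∑ i ∈ range N, g (i + 1) = ∑ i ∈ range N, g i :=
  add_right_cancel (b := g 0) <| by rw [← sum_range_succ', sum_range_succ, hg]

namespace ZMod

variable {N : ℕ}

theorem apply_eq_apply_zero_of_add_one {α : Type*} (g : ZMod N → α)
    (hg : ∀ c, g (c + 1) = g c) (c : ZMod N) : g c = g 0 := by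
  obtain ⟨k, rfl⟩ := intCast_surjective c
  induction k using Int.induction_on with
  | zero => simp
  | succ k ih => push_cast at ih ⊢; rw [hg, ih]
  | pred k ih => push_cast at ih ⊢; rw [← ih, ← hg, sub_add_cancel]

theorem natCast_succ_add (i : ℕ) (c : ZMod N) : ((i + 1 : ℕ) : ZMod N) + c = i + (c + 1) := by
  push_cast; ring

theorem sum_range_natCast_add {M : Type*} [AddCancelCommMonoid M] (f : ZMod N → M)
    (c : ZMod N) : ∑ i ∈ range N, f (i + c) = ∑ i ∈ range N, f i := by
  refine (apply_eq_apply_zero_of_add_one (fun c : ZMod N => ∑ i ∈ range N, f (i + c))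
    (fun c => ?_) c).trans (by simp only [add_zero])
  simpa only [natCast_succ_add] using sum_range_rotate (fun i : ℕ => f (i + c)) (by simp)

end ZMod

theorem wedge_natCast_add_one {N : ℕ} {R : Type*} [CommRing R] (ω η : ZMod N → R)
    (hω : ∑ i ∈ range N, ω i = 0) (hη : ∑ i ∈ range N, η i = 0) (c : ZMod N) :
    wedge (fun i => ω (i + (c + 1))) (fun i => η (i + (c + 1))) N =
      wedge (fun i => ω (i + c)) (fun i => η (i + c)) N := by
  have := wedge_rotate (fun i : ℕ => ω (i + c)) (fun i : ℕ => η (i + c)) (N := N)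
    (by simp) (by simp)
  simpa only [ZMod.natCast_succ_add, ZMod.sum_range_natCast_add, hω, hη, mul_zero, sub_zero,
    add_zero] using this

theorem wedge_product_cyclic_invariance_general
    (N : ℕ) (ω η : ZMod N → ℝ)
    (hω : ∑ i ∈ Finset.range N, ω (i : ZMod N) = 0)
    (hη : ∑ i ∈ Finset.range N, η (i : ZMod N) = 0) (k : ℤ) :
    ∑ i ∈ Finset.range N, ∑ j ∈ Finset.Ico (i + 1) N,
        (ω ((i : ZMod N) + (k : ZMod N)) * η ((j : ZMod N) + (k : ZMod N)) -
          ω ((j : ZMod N) + (k : ZMod N)) * η ((i : ZMod N) + (k : ZMod N)))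
      = ∑ i ∈ Finset.range N, ∑ j ∈ Finset.Ico (i + 1) N,
        (ω (i : ZMod N) * η (j : ZMod N) - ω (j : ZMod N) * η (i : ZMod N)) := by
  simpa only [wedge, add_zero] using ZMod.apply_eq_apply_zero_of_add_one
    (fun c : ZMod N => wedge (fun i => ω (i + c)) (fun i => η (i + c)) N)
    (wedge_natCast_add_one ω η hω hη) k

/-- Lemma 5.2: cyclic invariance of the wedge product. If `ω, η : ℤ/Nℤ → ℝ`
both sum to zero, then for every integer `k`,
`∑_{0 ≤ i < j ≤ N-1} (ω(i+k)η(j+k) − ω(j+k)η(i+k))` is independent of `k`. -/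
theorem wedge_product_cyclic_invariance
    (N : ℕ) (hN : 1 ≤ N) (ω η : ZMod N → ℝ)
    (hω : ∑ i ∈ Finset.range N, ω (i : ZMod N) = 0)
    (hη : ∑ i ∈ Finset.range N, η (i : ZMod N) = 0) (k : ℤ) :
    ∑ i ∈ Finset.range N, ∑ j ∈ Finset.Ico (i + 1) N,
        (ω ((i : ZMod N) + (k : ZMod N)) * η ((j : ZMod N) + (k : ZMod N)) -
          ω ((j : ZMod N) + (k : ZMod N)) * η ((i : ZMod N) + (k : ZMod N)))
      = ∑ i ∈ Finset.range N, ∑ j ∈ Finset.Ico (i + 1) N,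
        (ω (i : ZMod N) * η (j : ZMod N) - ω (j : ZMod N) * η (i : ZMod N)) :=
  wedge_product_cyclic_invariance_general N ω η hω hη k
end

section
/- Discrete Stokes boundary identity: let N be a natural number and let ω, η : {1, …, N} → ℝ be such that ∑_{j=1}^{N} ω_j = 0. Define the partial sums α_i = ∑_{j=1}^{i} ω_j for 0 ≤ i ≤ N (so α_0 = 0 and α_N = 0). Then ∑_{i=1}^{N} ((α_{i−1} + α_i)/2) · η_i = (1/2) · ∑_{1 ≤ i < j ≤ N} ( ω_i·η_j − ω_j·η_i ). (This is the key computation in the face-boundary-insertion step of the proof of the discrete Stokes formula, Proposition 5.4 of the paper, where ω_i = ω(ε_i) and η_i = η(ε_i) are the values of two co-boundaries on the arcs ε_1, …, ε_{4g} of a face boundary and α is the potential of ω vanishing at the starting vertex.) -/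
/-!
Writing `α_i = ∑_{j ≤ i} ω_j`, the wedge sum `∑_{i<j} (ω_i η_j - ω_j η_i)` splits into two
halves: summing the first over `i < j` first gives `∑_j α_{j-1} η_j`, and summing the second over
`j > i` first gives `∑_i (α_N - α_i) η_i`. Hence the wedge sum equals
`∑_i (α_{i-1} + α_i - α_N) η_i`, and `α_N = 0` leaves twice the trapezoidal sum.
-/

open Finset

namespace Finset

theorem sum_Icc_sum_Ioc_comm {ι M : Type*} [LinearOrder ι] [LocallyFiniteOrder ι]
    [AddCommMonoid M] (a b : ι) (f : ι → ι → M) :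
    ∑ i ∈ Icc a b, ∑ j ∈ Ioc i b, f i j = ∑ j ∈ Icc a b, ∑ i ∈ Ico a j, f i j :=
  sum_comm' fun i j => by
    simp only [mem_Icc, mem_Ioc, mem_Ico]
    grind

theorem sum_Ioc_eq_sum_Icc_one_sub {M : Type*} [AddCommGroup M] (f : ℕ → M) {i N : ℕ}
    (hi : i ≤ N) : ∑ j ∈ Ioc i N, f j = ∑ j ∈ Icc 1 N, f j - ∑ j ∈ Icc 1 i, f j := by
  rw [eq_sub_iff_add_eq']
  exact sum_Ioc_consecutive f (Nat.zero_le i) hi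

end Finset

theorem Nat.Ico_one_eq_Icc_one_sub_one (j : ℕ) : Finset.Ico 1 j = Finset.Icc 1 (j - 1) := by
  ext
  simp only [Finset.mem_Ico, Finset.mem_Icc]
  omega

theorem sum_wedge_eq_sum_partialSums_mul {R : Type*} [CommRing R] (ω η : ℕ → R) (N : ℕ) :
    ∑ i ∈ Icc 1 N, ∑ j ∈ Ioc i N, (ω i * η j - ω j * η i)
      = ∑ i ∈ Icc 1 N,
          (∑ j ∈ Icc 1 (i - 1), ω j + ∑ j ∈ Icc 1 i, ω j - ∑ j ∈ Icc 1 N, ω j) * η i := by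
  have first_half : ∑ i ∈ Icc 1 N, ∑ j ∈ Ioc i N, ω i * η j
      = ∑ j ∈ Icc 1 N, (∑ i ∈ Icc 1 (j - 1), ω i) * η j := by
    rw [sum_Icc_sum_Ioc_comm]
    simp only [← sum_mul, Nat.Ico_one_eq_Icc_one_sub_one]
  have second_half : ∑ i ∈ Icc 1 N, ∑ j ∈ Ioc i N, ω j * η i
      = ∑ i ∈ Icc 1 N, (∑ j ∈ Icc 1 N, ω j - ∑ j ∈ Icc 1 i, ω j) * η i :=
    sum_congr rfl fun i hi => by
      rw [← sum_mul, sum_Ioc_eq_sum_Icc_one_sub ω (mem_Icc.1 hi).2]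
  simp only [sum_sub_distrib]
  rw [first_half, second_half, ← sum_sub_distrib]
  exact sum_congr rfl fun i _ => by ring

/-- The key computation in the proof of the discrete Stokes formula
(Proposition 5.4): for a sequence `ω_1, …, ω_N` summing to zero with partial
sums `α_i = ∑_{j=1}^{i} ω_j`,
`∑_{i=1}^{N} ((α_{i-1} + α_i)/2) η_i = (1/2) ∑_{1 ≤ i < j ≤ N} (ω_i η_j − ω_j η_i)`. -/
theorem discrete_stokes_boundary_identity
    (N : ℕ) (ω η : ℕ → ℝ)
    (hsum : ∑ j ∈ Finset.Icc 1 N, ω j = 0)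
    (α : ℕ → ℝ) (hα : ∀ i : ℕ, α i = ∑ j ∈ Finset.Icc 1 i, ω j) :
    ∑ i ∈ Finset.Icc 1 N, ((α (i - 1) + α i) / 2) * η i
      = (1 / 2) * ∑ i ∈ Finset.Icc 1 N, ∑ j ∈ Finset.Ioc i N,
          (ω i * η j - ω j * η i) := by
  rw [sum_wedge_eq_sum_partialSums_mul, hsum, mul_sum]
  refine sum_congr rfl fun i _ => ?_
  rw [hα, hα]
  ring
end

section
/- Let V be a finite directed graph (a finite type V together with a relation r : V → V → Prop) such that every vertex has at most one in-neighbor (for each v, the set {u : r u v} has at most one element), and such that every vertex that is not a sink has exactly two out-neighbors (for each v with some w satisfying r v w, the set {w : r v w} has exactly two elements). Then the number of non-sink vertices is at most the number of sinks. (This is the abstract content of the discharging argument proving the claim |F(H)| ≤ |∂H| in Appendix C of the paper, where the non-sinks are the faces of the subgraph H of the universal cover of a system of quads, the sinks are the boundary edge sides of H, out-edges go to the two adjacent faces or boundary edges of one level higher, and the in-degree bound comes from the fact that each face of level i is adjacent to at most one face of level i−1.) -/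
/-!
Double counting: the edges are counted once as out-degrees, at least twice per non-sink, and once
as in-degrees, at most once per vertex. Hence `2 · #non-sinks ≤ |V| = #non-sinks + #sinks`.
-/

open Finset

section DirectedGraph

variable {V : Type*} [Fintype V] (r : V → V → Prop) [DecidableRel r]

theorem sum_card_out_le_card (hin : ∀ v : V, #{u | r u v} ≤ 1) :
    ∑ v, #{w | r v w} ≤ Fintype.card V :=
  calc ∑ v, #{w | r v w} = ∑ v, #{u | r u v} :=
        sum_card_bipartiteAbove_eq_sum_card_bipartiteBelow r
    _ ≤ #(univ : Finset V) • 1 := sum_le_card_nsmul _ _ _ fun v _ => hin v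
    _ = Fintype.card V := by rw [smul_eq_mul, mul_one, card_univ]

theorem two_mul_card_nonSinks_le_sum_card_out (hout : ∀ v : V, (∃ w, r v w) → 2 ≤ #{w | r v w}) :
    2 * #{v | ∃ w, r v w} ≤ ∑ v, #{w | r v w} :=
  calc 2 * #{v | ∃ w, r v w} = #{v | ∃ w, r v w} • 2 := by rw [smul_eq_mul, mul_comm]
    _ ≤ ∑ v ∈ {v | ∃ w, r v w}, #{w | r v w} :=
        card_nsmul_le_sum _ _ _ fun v hv => hout v (mem_filter.1 hv).2
    _ ≤ ∑ v, #{w | r v w} := sum_le_sum_of_subset (subset_univ _)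

end DirectedGraph

/-- Discharging argument of Appendix C: in a finite directed graph in which
every vertex has at most one in-neighbor and every non-sink vertex has exactly
two out-neighbors, the number of non-sinks is at most the number of sinks. -/
theorem nonSinks_le_sinks
    {V : Type*} [Fintype V] (r : V → V → Prop) [DecidableRel r]
    (hin : ∀ v : V, (Finset.univ.filter (fun u => r u v)).card ≤ 1)
    (hout : ∀ v : V, (∃ w, r v w) → (Finset.univ.filter (fun w => r v w)).card = 2) :
    (Finset.univ.filter (fun v : V => ∃ w, r v w)).card ≤
      (Finset.univ.filter (fun v : V => ¬ ∃ w, r v w)).card := by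
  have hsplit : #{v | ∃ w, r v w} + #{v | ¬ ∃ w, r v w} = Fintype.card V :=
    card_filter_add_card_filter_not _
  have hdouble := two_mul_card_nonSinks_le_sum_card_out r fun v hv => (hout v hv).ge
  have hbound := sum_card_out_le_card r hin
  omega
end
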